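/- arXiv:2308.04378 — 4 statements merged into one kernel-verified Lean document; each statement's English description precedes it below -/
import Mathlib

section
/- In dimension l = 1: let ξ ≤ ξ' be real numbers, x ∈ ℝ^d, γ ∈ ℝ^d, and let c : ℝ^d × ℝ → ℝ be continuous. For every continuous nondecreasing path h : [0,1] → ℝ with h(0) = ξ, h(1) = ξ', the Stieltjes integral ∫₀¹ c(x + γ(h(λ) − ξ), h(λ)) dh(λ) equals ∫₀^{ξ'−ξ} c(x + γζ, ξ + ζ) dζ. Consequently the infimum over all such interpolating paths of the jump cost is exactly ∫₀^{ξ'−ξ} c(x + γζ, ξ + ζ) dζ. -/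
open MeasureTheory

open scoped Classical in
noncomputable def stieltjesOf (f : ℝ → ℝ) : Measure ℝ :=
  if h : Monotone f ∧ Continuous f then
    (⟨f, h.1, fun _ => h.2.continuousWithinAt⟩ : StieltjesFunction ℝ).measure
  else 0

/-!
A continuous Stieltjes function `f` pushes its measure on `[a, b]` forward to Lebesgue measure
on `[f a, f b]`: the preimage of `(-∞, t]` in `[a, b]` is an interval `[a, c]` with `f c = t`
(take `c` the last point of the level set), of `f`-measure `t - f a`. The change of variables
`ζ = h λ - ξ` is then integration against this pushforward, so the Stieltjes jump cost does not
depend on the path, and the set whose infimum is taken is a singleton (the linear path is in it).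
-/

open Set

theorem exists_preimage_Iic_inter_Icc_eq_Icc {α β : Type*} [ConditionallyCompleteLinearOrder α]
    [TopologicalSpace α] [OrderTopology α] [DenselyOrdered α] [LinearOrder β]
    [TopologicalSpace β] [OrderClosedTopology β] {f : α → β} {a b : α} {t : β} (hab : a ≤ b)
    (hf : MonotoneOn f (Icc a b)) (hfc : ContinuousOn f (Icc a b)) (ht : t ∈ Icc (f a) (f b)) :
    ∃ c ∈ Icc a b, f c = t ∧ f ⁻¹' Iic t ∩ Icc a b = Icc a c := by
  have hcompact : IsCompact (Icc a b ∩ f ⁻¹' {t}) :=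
    isCompact_Icc.of_isClosed_subset
      (hfc.preimage_isClosed_of_isClosed isClosed_Icc isClosed_singleton) inter_subset_left
  obtain ⟨s₀, hs₀, hfs₀⟩ := intermediate_value_Icc hab hfc ht
  obtain ⟨c, ⟨hc, hfct⟩, hgreatest⟩ := hcompact.exists_isGreatest ⟨s₀, hs₀, hfs₀⟩
  refine ⟨c, hc, hfct, Subset.antisymm (fun s ⟨hfs, hs⟩ => ⟨hs.1, ?_⟩) fun s hs => ?_⟩
  · by_contra! hcs
    have hfst : f s = t := le_antisymm hfs (hfct ▸ hf hc hs hcs.le)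
    exact hcs.not_ge (hgreatest ⟨hs, hfst⟩)
  · have hsab : s ∈ Icc a b := ⟨hs.1, hs.2.trans hc.2⟩
    exact ⟨hfct ▸ hf hsab hc hs.2, hsab⟩

namespace StieltjesFunction

variable {R : Type*} [ConditionallyCompleteLinearOrder R] [TopologicalSpace R] [OrderTopology R]
  [DenselyOrdered R] [MeasurableSpace R] [BorelSpace R] [SecondCountableTopology R]
  (f : StieltjesFunction R)

theorem map_measure_restrict_Icc (hf : Continuous f) {a b : R} (hab : a ≤ b) :
    (f.measure.restrict (Icc a b)).map f = volume.restrict (Icc (f a) (f b)) := by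
  have : IsFiniteMeasure (f.measure.restrict (Icc a b)) :=
    isFiniteMeasure_restrict.2 (by rw [f.measure_Icc]; exact ENNReal.ofReal_ne_top)
  refine Measure.ext_of_Iic _ _ fun t => ?_
  have htarget : Iic t ∩ Icc (f a) (f b) = Icc (f a) (min t (f b)) := by
    ext y
    simp only [mem_inter_iff, mem_Iic, mem_Icc, le_min_iff]
    tauto
  rw [Measure.map_apply hf.measurable measurableSet_Iic,
    Measure.restrict_apply (hf.measurable measurableSet_Iic),
    Measure.restrict_apply measurableSet_Iic, htarget, Real.volume_Icc]
  rcases lt_or_ge t (f a) with hta | hat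
  · have hempty : f ⁻¹' Iic t ∩ Icc a b = ∅ :=
      eq_empty_of_forall_notMem fun s ⟨hst, hs⟩ => hta.not_ge ((f.mono hs.1).trans hst)
    rw [hempty, measure_empty, ENNReal.ofReal_of_nonpos]
    linarith [min_le_left t (f b)]
  · have hclip : f ⁻¹' Iic t ∩ Icc a b = f ⁻¹' Iic (min t (f b)) ∩ Icc a b := by
      ext s
      simp only [mem_inter_iff, mem_preimage, mem_Iic, le_min_iff]
      exact ⟨fun ⟨hst, hs⟩ => ⟨⟨hst, f.mono hs.2⟩, hs⟩, fun ⟨⟨hst, _⟩, hs⟩ => ⟨hst, hs⟩⟩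
    obtain ⟨c, -, hfc, hpre⟩ := exists_preimage_Iic_inter_Icc_eq_Icc hab (f.mono.monotoneOn _)
      hf.continuousOn ⟨le_min hat (f.mono hab), min_le_right t (f b)⟩
    rw [hclip, hpre, f.measure_Icc, hfc, hf.continuousWithinAt.leftLim_eq]

theorem integral_comp_Icc {E : Type*} [NormedAddCommGroup E] [NormedSpace ℝ E]
    (hf : Continuous f) {a b : R} (hab : a ≤ b) {g : ℝ → E}
    (hg : AEStronglyMeasurable g (volume.restrict (Icc (f a) (f b)))) :
    ∫ s in Icc a b, g (f s) ∂f.measure = ∫ y in f a..f b, g y := by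
  rw [← integral_map hf.measurable.aemeasurable (by rwa [f.map_measure_restrict_Icc hf hab]),
    f.map_measure_restrict_Icc hf hab, intervalIntegral.integral_of_le (f.mono hab),
    integral_Icc_eq_integral_Ioc]

end StieltjesFunction

/-- In dimension `l = 1`, every continuous nondecreasing interpolating path from `ξ` to
`ξ'` gives the same Stieltjes jump cost `∫₀^{ξ'−ξ} c(x + γζ, ξ + ζ) dζ`; consequently
the infimum over all such paths equals this linearly interpolated cost. -/
theorem stmt_4 {d : ℕ} (ξ ξ' : ℝ) (hle : ξ ≤ ξ') (x γ : Fin d → ℝ)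
    (c : (Fin d → ℝ) → ℝ → ℝ)
    (hc : Continuous fun p : (Fin d → ℝ) × ℝ => c p.1 p.2) :
    (∀ h : ℝ → ℝ, Monotone h → Continuous h → h 0 = ξ → h 1 = ξ' →
      ∫ lam in Set.Icc (0:ℝ) 1, c (x + (h lam - ξ) • γ) (h lam) ∂(stieltjesOf h)
        = ∫ ζ in (0:ℝ)..(ξ' - ξ), c (x + ζ • γ) (ξ + ζ)) ∧
    sInf {v : ℝ | ∃ h : ℝ → ℝ, Monotone h ∧ Continuous h ∧ h 0 = ξ ∧ h 1 = ξ' ∧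
        v = ∫ lam in Set.Icc (0:ℝ) 1, c (x + (h lam - ξ) • γ) (h lam) ∂(stieltjesOf h)}
      = ∫ ζ in (0:ℝ)..(ξ' - ξ), c (x + ζ • γ) (ξ + ζ) := by
  let g : ℝ → ℝ := fun y => c (x + (y - ξ) • γ) y
  have hg : Continuous g := hc.comp (f := fun y => (x + (y - ξ) • γ, y)) (by fun_prop)
  have cost_eq (h : ℝ → ℝ) (hm : Monotone h) (hh : Continuous h) (h0 : h 0 = ξ) (h1 : h 1 = ξ') :
      ∫ lam in Icc (0:ℝ) 1, c (x + (h lam - ξ) • γ) (h lam) ∂(stieltjesOf h)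
        = ∫ ζ in (0:ℝ)..(ξ' - ξ), c (x + ζ • γ) (ξ + ζ) := by
    let F : StieltjesFunction ℝ := ⟨h, hm, fun _ => hh.continuousWithinAt⟩
    have hshift := intervalIntegral.integral_comp_add_left g ξ (a := 0) (b := ξ' - ξ)
    simp only [g, add_sub_cancel_left, add_zero, add_sub_cancel] at hshift
    have hchange := F.integral_comp_Icc hh zero_le_one hg.aestronglyMeasurable
    rw [show F 0 = ξ from h0, show F 1 = ξ' from h1] at hchange
    rw [stieltjesOf, dif_pos ⟨hm, hh⟩, hshift]
    exact hchange
  have hlin : Monotone fun t : ℝ => ξ + t * (ξ' - ξ) :=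
    monotone_const.add (monotone_id.mul_const (sub_nonneg.2 hle))
  refine ⟨cost_eq, IsLeast.csInf_eq ⟨⟨fun t : ℝ => ξ + t * (ξ' - ξ), hlin, by fun_prop, by simp,
    by simp, (cost_eq _ hlin (by fun_prop) (by simp) (by simp)).symm⟩, ?_⟩⟩
  rintro v ⟨h, hm, hh, h0, h1, rfl⟩
  exact (cost_eq h hm hh h0 h1).ge
end

section
/- Let δ > 0, M ≥ 0, and let σ, V : [0,1] → ℝ be nondecreasing functions with σ(0) = 0, σ(1) ≤ 1, V(0) = 0, V(1) ≤ M. Define β(u) := (u + δ(σ(u) + V(u))) / (1 + δ(1 + M)) and its right-continuous inverse β̄(u) := inf{v ∈ [0,1] : β(v) > u} ∧ 1. Then for all u ∈ [0,1]: |β̄(u) − u| ≤ 3δ(1 + M). -/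
/-!
Writing `c = δ(1+M)`, the bounds `0 ≤ σ + V ≤ 1 + M` on `[0,1]` sandwich `β` as
`v ≤ (1+c) β(v) ≤ v + c`. Hence every `v` with `β(v) > u` exceeds `(1+c)u - c ≥ u - c`, while every
`v > (1+c)u` has `β(v) > u`, so `β̄(u) ≤ (1+c)u ≤ u + c`. This gives even `|β̄(u) − u| ≤ δ(1+M)`.
-/

open Set

/-- The paper's `β̄(u) = inf {v ∈ [0,1] : β v > u} ∧ 1`. -/
noncomputable def rightInvIcc (β : ℝ → ℝ) (u : ℝ) : ℝ :=
  sInf ({v | v ∈ Icc (0:ℝ) 1 ∧ u < β v} ∪ {1})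

section rightInvIcc

variable {β : ℝ → ℝ} {u a : ℝ}

lemma le_rightInvIcc (ha : a ≤ 1) (h : ∀ v ∈ Icc (0:ℝ) 1, u < β v → a ≤ v) :
    a ≤ rightInvIcc β u := by
  refine le_csInf ⟨1, Or.inr rfl⟩ ?_
  rintro v (⟨hv, huv⟩ | rfl)
  exacts [h v hv huv, ha]

lemma rightInvIcc_le (ha : 0 ≤ a) (h : ∀ v ∈ Icc (0:ℝ) 1, a < v → u < β v) :
    rightInvIcc β u ≤ a := by
  have hbdd : BddBelow ({v | v ∈ Icc (0:ℝ) 1 ∧ u < β v} ∪ {1}) := by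
    refine ⟨0, ?_⟩
    rintro v (⟨hv, -⟩ | rfl)
    exacts [hv.1, zero_le_one]
  rcases le_or_gt 1 a with h1a | ha1
  · exact (csInf_le hbdd (Or.inr rfl)).trans h1a
  refine le_of_forall_pos_lt_add fun ε hε => ?_
  set t := min 1 (a + ε / 2)
  have ht : t ∈ Icc (0:ℝ) 1 := ⟨le_min zero_le_one (by linarith), min_le_left _ _⟩
  have hat : a < t := lt_min ha1 (by linarith)
  calc rightInvIcc β u ≤ t := csInf_le hbdd (Or.inl ⟨ht, h t ht hat⟩)
    _ ≤ a + ε / 2 := min_le_right _ _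
    _ < a + ε := by linarith

lemma abs_rightInvIcc_sub_le {c : ℝ} (hc : 0 ≤ c)
    (hβ : ∀ v ∈ Icc (0:ℝ) 1, v ≤ (1 + c) * β v ∧ (1 + c) * β v ≤ v + c)
    (hu : u ∈ Icc (0:ℝ) 1) : |rightInvIcc β u - u| ≤ c := by
  obtain ⟨hu0, hu1⟩ := hu
  have hlower : (1 + c) * u - c ≤ rightInvIcc β u := by
    refine le_rightInvIcc (by nlinarith) fun v hv huv => ?_
    nlinarith [(hβ v hv).2]
  have hupper : rightInvIcc β u ≤ (1 + c) * u := by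
    refine rightInvIcc_le (by positivity) fun v hv hv' => ?_
    nlinarith [(hβ v hv).1]
  rw [abs_le]
  constructor <;> nlinarith

end rightInvIcc

/-- For `β(u) = (u + δ(σ(u)+V(u)))/(1 + δ(1+M))` built from nondecreasing `σ, V` with
`σ(0)=0`, `σ(1) ≤ 1`, `V(0)=0`, `V(1) ≤ M`, the right-continuous inverse `β̄` satisfies
`|β̄(u) − u| ≤ 3δ(1+M)` on `[0,1]`. -/
theorem stmt_10 (δ M : ℝ) (hδ : 0 < δ) (hM : 0 ≤ M) (σ V : ℝ → ℝ)
    (hσm : MonotoneOn σ (Set.Icc 0 1)) (hVm : MonotoneOn V (Set.Icc 0 1))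
    (hσ0 : σ 0 = 0) (hσ1 : σ 1 ≤ 1) (hV0 : V 0 = 0) (hV1 : V 1 ≤ M) :
    let β : ℝ → ℝ := fun u => (u + δ * (σ u + V u)) / (1 + δ * (1 + M))
    let βbar : ℝ → ℝ := fun u => sInf ({v | v ∈ Set.Icc (0:ℝ) 1 ∧ u < β v} ∪ {1})
    ∀ u ∈ Set.Icc (0:ℝ) 1, |βbar u - u| ≤ 3 * δ * (1 + M) := by
  intro β βbar u hu
  have hc : 0 ≤ δ * (1 + M) := by positivity
  have hβ : ∀ v ∈ Icc (0:ℝ) 1,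
      v ≤ (1 + δ * (1 + M)) * β v ∧ (1 + δ * (1 + M)) * β v ≤ v + δ * (1 + M) := by
    intro v hv
    obtain ⟨hσv0, hσv1⟩ := hσm.mapsTo_Icc hv
    obtain ⟨hVv0, hVv1⟩ := hVm.mapsTo_Icc hv
    have hsum0 : 0 ≤ δ * (σ v + V v) := mul_nonneg hδ.le (by linarith)
    have hsum1 : δ * (σ v + V v) ≤ δ * (1 + M) := mul_le_mul_of_nonneg_left (by linarith) hδ.le
    simp only [β, mul_div_cancel₀ _ (by positivity : (1 + δ * (1 + M)) ≠ 0)]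
    constructor <;> linarith
  calc |βbar u - u| ≤ δ * (1 + M) := abs_rightInvIcc_sub_le hc hβ hu
    _ ≤ 3 * δ * (1 + M) := by linarith
end

section
/- Let c : ℝ^d × ℝ^l → ℝ^{1×l} be continuous, γ ∈ ℝ^{d×l}, x ∈ ℝ^d, and ξ ≤ ξ' in ℝ^l componentwise. Define the cost functional F on the compact set Γ(ξ,ξ') of continuous, componentwise nondecreasing, constant-ℓ¹-speed paths from ξ to ξ' by F(h) := ∫₀¹ c(x + γ(h(λ) − ξ), h(λ)) dh(λ). Then F is continuous on Γ(ξ,ξ') (with the uniform topology), and hence the infimum inf_{h ∈ Γ(ξ,ξ')} F(h) is attained. -/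
/-!
Both the integrand `c(x + γ(h(λ) − ξ), h(λ))` and the integrator `h` move continuously with `h`
in the uniform topology. Changing the integrand costs at most its uniform change times the total
mass `ξ' − ξ` of the Stieltjes measures. Changing the integrator is controlled by
Riemann–Stieltjes sums on a fixed uniform partition of `[0,1]` into `N` cells: each integral is
within `ω · mass` of its sum, `ω` being the oscillation of the integrand on a cell, and the sums
for two `δ`-close integrators differ by at most `2NMδ`, `M` bounding the integrand. Paths in
`Γ(ξ,ξ')` are `|ξ' − ξ|₁`-Lipschitz, so `Γ(ξ,ξ')` is compact by Arzelà–Ascoli.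
-/

open MeasureTheory

/-- Extension of a path on `[0,1]` to all of `ℝ` by clamping. -/
noncomputable def extIcc {l : ℕ} (f : C(Set.Icc (0:ℝ) 1, Fin l → ℝ)) : ℝ → Fin l → ℝ :=
  fun lam => f (Set.projIcc 0 1 zero_le_one lam)

open Set Filter Topology

lemma abs_riemannSum_sub_riemannSum_le {a f g : ℕ → ℝ} {M δ : ℝ} (N : ℕ)
    (ha : ∀ k < N, |a k| ≤ M) (hfg : ∀ k ≤ N, |g k - f k| ≤ δ) :
    |∑ k ∈ Finset.range N, a k * (g (k + 1) - g k) -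
        ∑ k ∈ Finset.range N, a k * (f (k + 1) - f k)| ≤ N * (2 * M * δ) := by
  rw [← Finset.sum_sub_distrib]
  refine (Finset.abs_sum_le_sum_abs _ _).trans ?_
  rw [← Finset.card_range N, ← nsmul_eq_mul, ← Finset.sum_const, Finset.card_range]
  refine Finset.sum_le_sum fun k hk => ?_
  have hk := Finset.mem_range.1 hk
  calc |a k * (g (k + 1) - g k) - a k * (f (k + 1) - f k)|
      = |a k| * |(g (k + 1) - f (k + 1)) - (g k - f k)| := by rw [← abs_mul]; ring_nf
    _ ≤ M * (δ + δ) :=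
        mul_le_mul (ha k hk) ((abs_sub _ _).trans (add_le_add (hfg _ hk) (hfg _ hk.le)))
          (abs_nonneg _) ((abs_nonneg _).trans (ha k hk))
    _ = 2 * M * δ := by ring

namespace StieltjesFunction

def ofMonotoneContinuous {f : ℝ → ℝ} (hf : Monotone f) (hc : Continuous f) :
    StieltjesFunction ℝ :=
  ⟨f, hf, fun _ => hc.continuousWithinAt⟩

@[simp]
lemma coe_ofMonotoneContinuous {f : ℝ → ℝ} (hf : Monotone f) (hc : Continuous f) :
    ⇑(ofMonotoneContinuous hf hc) = f :=
  rfl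

lemma nullSingletonClass_measure {F : StieltjesFunction ℝ} (hF : Continuous F) :
    NullSingletonClass F.measure where
  measure_singleton a := by
    rw [F.measure_singleton, leftLim_eq_of_tendsto
      ((hF.tendsto a).mono_left nhdsWithin_le_nhds), sub_self, ENNReal.ofReal_zero]

lemma measureReal_Ioc (F : StieltjesFunction ℝ) {a b : ℝ} (hab : a ≤ b) :
    F.measure.real (Ioc a b) = F b - F a := by
  rw [measureReal_def, F.measure_Ioc, ENNReal.toReal_ofReal (sub_nonneg.2 (F.mono hab))]

lemma abs_setIntegral_Ioc_sub_mul_le (F : StieltjesFunction ℝ) {H : ℝ → ℝ} (hH : Continuous H)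
    {a b ω : ℝ} (hab : a ≤ b) (hω : ∀ t ∈ Ioc a b, |H t - H a| ≤ ω) :
    |∫ t in Ioc a b, H t ∂F.measure - H a * (F b - F a)| ≤ ω * (F b - F a) := by
  have hfin : F.measure (Ioc a b) < ⊤ := measure_Ioc_lt_top
  have hsub : ∫ t in Ioc a b, H t ∂F.measure - H a * (F b - F a)
      = ∫ t in Ioc a b, (H t - H a) ∂F.measure := by
    rw [integral_sub hH.integrableOn_Ioc (integrableOn_const hfin.ne), setIntegral_const,
      F.measureReal_Ioc hab, smul_eq_mul, mul_comm]
  rw [hsub, ← F.measureReal_Ioc hab, ← Real.norm_eq_abs]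
  exact norm_setIntegral_le_of_norm_le_const hfin hω

lemma abs_setIntegral_Ioc_sub_riemannSum_le (F : StieltjesFunction ℝ) {H : ℝ → ℝ}
    (hH : Continuous H) {u : ℕ → ℝ} (hu : Monotone u) (N : ℕ) {ω : ℝ}
    (hω : ∀ k < N, ∀ t ∈ Ioc (u k) (u (k + 1)), |H t - H (u k)| ≤ ω) :
    |∫ t in Ioc (u 0) (u N), H t ∂F.measure -
        ∑ k ∈ Finset.range N, H (u k) * (F (u (k + 1)) - F (u k))| ≤
      ω * (F (u N) - F (u 0)) := by
  have hsplit : ∫ t in Ioc (u 0) (u N), H t ∂F.measure =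
      ∑ k ∈ Finset.range N, ∫ t in Ioc (u k) (u (k + 1)), H t ∂F.measure := by
    rw [← intervalIntegral.integral_of_le (hu (Nat.zero_le N)),
      ← intervalIntegral.sum_integral_adjacent_intervals fun k _ => hH.intervalIntegrable _ _]
    exact Finset.sum_congr rfl fun k _ => intervalIntegral.integral_of_le (hu k.le_succ)
  rw [hsplit, ← Finset.sum_sub_distrib, ← Finset.sum_range_sub (fun k => F (u k)),
    Finset.mul_sum]
  refine (Finset.abs_sum_le_sum_abs _ _).trans (Finset.sum_le_sum fun k hk => ?_)
  exact F.abs_setIntegral_Ioc_sub_mul_le hH (hu k.le_succ) (hω k (Finset.mem_range.1 hk))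

lemma abs_setIntegral_Ioc_sub_setIntegral_Ioc_le (F G : StieltjesFunction ℝ)
    {H : ℝ → ℝ} (hH : Continuous H) {N : ℕ} (hN : 0 < N) {M ω δ : ℝ}
    (hM : ∀ t ∈ Icc (0:ℝ) 1, |H t| ≤ M)
    (hω : ∀ s ∈ Icc (0:ℝ) 1, ∀ t ∈ Icc (0:ℝ) 1, dist s t ≤ (N : ℝ)⁻¹ → dist (H s) (H t) ≤ ω)
    (hδ : ∀ t ∈ Icc (0:ℝ) 1, |G t - F t| ≤ δ) :
    |∫ t in Ioc (0:ℝ) 1, H t ∂G.measure - ∫ t in Ioc (0:ℝ) 1, H t ∂F.measure| ≤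
      ω * (G 1 - G 0) + N * (2 * M * δ) + ω * (F 1 - F 0) := by
  have hN0 : (0:ℝ) < N := Nat.cast_pos.2 hN
  set u : ℕ → ℝ := fun k => k / N
  have hu : Monotone u := fun a b hab => by
    simp only [u]
    gcongr
  have hu0 : u 0 = 0 := by simp [u]
  have huN : u N = 1 := div_self hN0.ne'
  have hu_mem : ∀ k ≤ N, u k ∈ Icc (0:ℝ) 1 := fun k hk =>
    ⟨hu0 ▸ hu (Nat.zero_le k), huN ▸ hu hk⟩
  have hosc : ∀ k < N, ∀ t ∈ Ioc (u k) (u (k + 1)), |H t - H (u k)| ≤ ω := by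
    intro k hk t ht
    have hstep : u (k + 1) - u k = (N : ℝ)⁻¹ := by simp only [u]; push_cast; field_simp; ring
    have hmem : t ∈ Icc (0:ℝ) 1 :=
      Icc_subset_Icc (hu_mem k hk.le).1 (hu_mem (k + 1) hk).2 (Ioc_subset_Icc_self ht)
    refine hω t hmem (u k) (hu_mem k hk.le) ?_
    rw [Real.dist_eq, abs_of_nonneg (by linarith [ht.1])]
    linarith [ht.2]
  have hG := G.abs_setIntegral_Ioc_sub_riemannSum_le hH hu N hosc
  have hF := F.abs_setIntegral_Ioc_sub_riemannSum_le hH hu N hosc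
  have hGF := abs_riemannSum_sub_riemannSum_le N (a := fun k => H (u k))
    (f := fun k => F (u k)) (g := fun k => G (u k))
    (fun k hk => hM _ (hu_mem k hk.le)) (fun k hk => hδ _ (hu_mem k hk))
  rw [hu0, huN] at hG hF
  have := abs_le.1 hG
  have := abs_le.1 hF
  have := abs_le.1 hGF
  rw [abs_le]
  constructor <;> linarith

end StieltjesFunction

open StieltjesFunction

lemma stieltjesOf_eq_measure {f : ℝ → ℝ} (hf : Monotone f) (hc : Continuous f) :
    stieltjesOf f = (ofMonotoneContinuous hf hc).measure := by
  rw [stieltjesOf, dif_pos ⟨hf, hc⟩]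
  rfl

lemma setIntegral_Icc_stieltjesOf {f : ℝ → ℝ} (hf : Monotone f) (hc : Continuous f)
    (H : ℝ → ℝ) (a b : ℝ) :
    ∫ t in Icc a b, H t ∂stieltjesOf f =
      ∫ t in Ioc a b, H t ∂(ofMonotoneContinuous hf hc).measure := by
  have := nullSingletonClass_measure (F := ofMonotoneContinuous hf hc) hc
  rw [stieltjesOf_eq_measure hf hc, integral_Icc_eq_integral_Ioc]

lemma tendsto_setIntegral_Icc_stieltjesOf {ι : Type*} {L : Filter ι} {f : ι → ℝ → ℝ}
    {f₀ : ℝ → ℝ} (hf : ∀ᶠ i in L, Monotone (f i) ∧ Continuous (f i)) (hf₀ : Monotone f₀)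
    (hf₀c : Continuous f₀) (hlim : TendstoUniformlyOn f f₀ L (Icc 0 1)) {H : ℝ → ℝ}
    (hH : Continuous H) :
    Tendsto (fun i => ∫ t in Icc (0:ℝ) 1, H t ∂stieltjesOf (f i)) L
      (𝓝 (∫ t in Icc (0:ℝ) 1, H t ∂stieltjesOf f₀)) := by
  set m := f₀ 1 - f₀ 0
  have hm : 0 ≤ m := sub_nonneg.2 (hf₀ zero_le_one)
  obtain ⟨M, hM⟩ := (isCompact_Icc (a := (0:ℝ)) (b := 1)).exists_bound_of_continuousOn
    hH.continuousOn
  have hM0 : 0 ≤ M := (norm_nonneg _).trans (hM 0 (left_mem_Icc.2 zero_le_one))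
  rw [Metric.tendsto_nhds]
  intro ε hε
  -- the partition estimate gives the error bound `ω (m + 1) + 2NMδ + ω m`
  set ω := ε / (4 * (m + 1))
  obtain ⟨r, hr, hHr⟩ := Metric.uniformContinuousOn_iff.1
    (isCompact_Icc.uniformContinuousOn_of_continuous hH.continuousOn) ω (by positivity)
  obtain ⟨N, hN⟩ := exists_nat_gt r⁻¹
  have hN0 : 0 < N := Nat.cast_pos.1 ((inv_pos.2 hr).trans hN)
  set δ := min (1 / 2) (ε / (4 * (N * M + 1)))
  have hδ : 0 < δ := by positivity
  filter_upwards [hf, Metric.tendstoUniformlyOn_iff.1 hlim δ hδ] with i ⟨hfi, hfic⟩ hclose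
  have hδf : ∀ t ∈ Icc (0:ℝ) 1, |f i t - f₀ t| ≤ δ := fun t ht => by
    rw [abs_sub_comm, ← Real.dist_eq]
    exact (hclose t ht).le
  have hI := (ofMonotoneContinuous hf₀ hf₀c).abs_setIntegral_Ioc_sub_setIntegral_Ioc_le
    (ofMonotoneContinuous hfi hfic) hH hN0 hM
    (fun s hs t ht hst => (hHr s hs t ht (hst.trans_lt (inv_lt_of_inv_lt₀ hr hN))).le) hδf
  simp only [coe_ofMonotoneContinuous] at hI
  have hmass : f i 1 - f i 0 ≤ m + 1 := by
    have h1 := abs_le.1 (hδf 1 (right_mem_Icc.2 zero_le_one))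
    have h0 := abs_le.1 (hδf 0 (left_mem_Icc.2 zero_le_one))
    have : δ ≤ 1 / 2 := min_le_left _ _
    linarith
  have hω : ω * (m + 1) + ω * m < ε / 2 := by
    have : ω * (m + 1) * 4 = ε := by simp only [ω]; field_simp
    nlinarith
  have hNMδ : N * (2 * M * δ) ≤ ε / 2 := by
    have : δ * (4 * (N * M + 1)) ≤ ε := (le_div_iff₀ (by positivity)).1 (min_le_right _ _)
    nlinarith
  have hωmass := mul_le_mul_of_nonneg_left hmass (by positivity : (0:ℝ) ≤ ω)
  rw [setIntegral_Icc_stieltjesOf hfi hfic, setIntegral_Icc_stieltjesOf hf₀ hf₀c, Real.dist_eq]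
  linarith

lemma tendsto_setIntegral_Icc_stieltjesOf_of_tendstoUniformlyOn {ι : Type*} {L : Filter ι}
    {H : ι → ℝ → ℝ} {H₀ : ℝ → ℝ} (hH : ∀ i, Continuous (H i)) (hH₀ : Continuous H₀)
    (hHlim : TendstoUniformlyOn H H₀ L (Icc 0 1)) {f : ι → ℝ → ℝ} {f₀ : ℝ → ℝ}
    (hf : ∀ᶠ i in L, Monotone (f i) ∧ Continuous (f i)) (hf₀ : Monotone f₀)
    (hf₀c : Continuous f₀) (hflim : TendstoUniformlyOn f f₀ L (Icc 0 1)) :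
    Tendsto (fun i => ∫ t in Icc (0:ℝ) 1, H i t ∂stieltjesOf (f i)) L
      (𝓝 (∫ t in Icc (0:ℝ) 1, H₀ t ∂stieltjesOf f₀)) := by
  suffices hdiff : Tendsto (fun i => ∫ t in Icc (0:ℝ) 1, H i t ∂stieltjesOf (f i) -
      ∫ t in Icc (0:ℝ) 1, H₀ t ∂stieltjesOf (f i)) L (𝓝 0) by
    simpa using hdiff.add (tendsto_setIntegral_Icc_stieltjesOf hf hf₀ hf₀c hflim hH₀)
  have hmass : Tendsto (fun i => f i 1 - f i 0) L (𝓝 (f₀ 1 - f₀ 0)) :=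
    (hflim.tendsto_at (right_mem_Icc.2 zero_le_one)).sub
      (hflim.tendsto_at (left_mem_Icc.2 zero_le_one))
  set m := f₀ 1 - f₀ 0
  have hm : 0 ≤ m := sub_nonneg.2 (hf₀ zero_le_one)
  rw [Metric.tendsto_nhds]
  intro ε hε
  set η := ε / (m + 2)
  filter_upwards [hf, Metric.tendstoUniformlyOn_iff.1 hHlim η (by positivity),
    hmass.eventually (eventually_lt_nhds (lt_add_one m))] with i ⟨hfi, hfic⟩ hclose hmi
  set F := ofMonotoneContinuous hfi hfic
  rw [setIntegral_Icc_stieltjesOf hfi hfic, setIntegral_Icc_stieltjesOf hfi hfic,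
    ← integral_sub (hH i).integrableOn_Ioc hH₀.integrableOn_Ioc, dist_zero_right]
  calc ‖∫ t in Ioc (0:ℝ) 1, (H i t - H₀ t) ∂F.measure‖
      ≤ η * F.measure.real (Ioc 0 1) :=
        norm_setIntegral_le_of_norm_le_const measure_Ioc_lt_top fun t ht => by
          rw [← dist_eq_norm, dist_comm]
          exact (hclose t (Ioc_subset_Icc_self ht)).le
    _ = η * (f i 1 - f i 0) := by rw [F.measureReal_Ioc zero_le_one, coe_ofMonotoneContinuous]
    _ < ε := by
        have hη : η * (m + 2) = ε := by simp only [η]; field_simp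
        nlinarith [mul_le_mul_of_nonneg_left hmi.le (by positivity : (0:ℝ) ≤ η)]

section MonotonePath

variable {l : ℕ} {ξ ξ' : Fin l → ℝ}

-- `Γ(ξ,ξ')`, stated for bare functions so that Arzelà–Ascoli can be run in the product topology
def IsMonotonePath (ξ ξ' : Fin l → ℝ) (f : Icc (0:ℝ) 1 → Fin l → ℝ) : Prop :=
  (∀ i, Monotone fun lam => f lam i) ∧
    f ⟨0, by norm_num⟩ = ξ ∧ f ⟨1, by norm_num⟩ = ξ' ∧
    ∀ lam : Icc (0:ℝ) 1, ∑ i, |f lam i - ξ i| = (lam : ℝ) * ∑ i, |ξ' i - ξ i|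

namespace IsMonotonePath

variable {f : Icc (0:ℝ) 1 → Fin l → ℝ}

lemma le_apply (hf : IsMonotonePath ξ ξ' f) (t : Icc (0:ℝ) 1) : ξ ≤ f t := by
  obtain ⟨hmono, h0, -, -⟩ := hf
  exact fun i => h0 ▸ hmono i (show ⟨0, _⟩ ≤ t from t.2.1)

lemma apply_le (hf : IsMonotonePath ξ ξ' f) (t : Icc (0:ℝ) 1) : f t ≤ ξ' := by
  obtain ⟨hmono, -, h1, -⟩ := hf
  exact fun i => h1 ▸ hmono i (show t ≤ ⟨1, _⟩ from t.2.2)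

lemma sub_le_of_le (hf : IsMonotonePath ξ ξ' f) {a b : Icc (0:ℝ) 1} (hab : a ≤ b)
    (i : Fin l) : f b i - f a i ≤ ((b : ℝ) - a) * ∑ i, |ξ' i - ξ i| := by
  have hlow := hf.le_apply
  obtain ⟨hmono, -, -, hspeed⟩ := hf
  have hdisp : ∀ t, ∑ j, (f t j - ξ j) = (t : ℝ) * ∑ i, |ξ' i - ξ i| := fun t => by
    rw [← hspeed t]
    exact Finset.sum_congr rfl fun j _ => (abs_of_nonneg (sub_nonneg.2 (hlow t j))).symm
  have hsum : ∑ j, (f b j - f a j) = ((b : ℝ) - a) * ∑ i, |ξ' i - ξ i| := by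
    rw [sub_mul, ← hdisp, ← hdisp, ← Finset.sum_sub_distrib]
    simp
  exact hsum ▸ Finset.single_le_sum (fun j _ => sub_nonneg.2 (hmono j hab)) (Finset.mem_univ i)

lemma lipschitzWith (hf : IsMonotonePath ξ ξ' f) : LipschitzWith (∑ i, ‖ξ' i - ξ i‖₊) f := by
  refine LipschitzWith.of_dist_le_mul fun a b => ?_
  wlog hab : a ≤ b generalizing a b
  · rw [dist_comm, dist_comm a]
    exact this b a (le_of_not_ge hab)
  push_cast
  simp only [Real.norm_eq_abs]
  rw [dist_pi_le_iff (by positivity)]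
  intro i
  rw [Real.dist_eq, abs_sub_comm, abs_of_nonneg (sub_nonneg.2 (hf.1 i hab)), Subtype.dist_eq,
    Real.dist_eq, abs_sub_comm, abs_of_nonneg (sub_nonneg.2 (show (a : ℝ) ≤ b from hab)),
    mul_comm]
  exact hf.sub_le_of_le hab i

end IsMonotonePath

lemma isMonotonePath_lineMap (hle : ξ ≤ ξ') :
    IsMonotonePath ξ ξ' fun t => ξ + (t : ℝ) • (ξ' - ξ) := by
  refine ⟨fun i a b hab => ?_, by simp, by simp, fun t => ?_⟩
  · simp only [Pi.add_apply, Pi.smul_apply, Pi.sub_apply, smul_eq_mul, add_le_add_iff_left]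
    exact mul_le_mul_of_nonneg_right hab (sub_nonneg.2 (hle i))
  · simp only [Pi.add_apply, Pi.smul_apply, Pi.sub_apply, smul_eq_mul, add_sub_cancel_left,
      abs_mul, abs_of_nonneg t.2.1, Finset.mul_sum]

lemma isClosed_setOf_isMonotonePath :
    IsClosed {f : Icc (0:ℝ) 1 → Fin l → ℝ | IsMonotonePath ξ ξ' f} := by
  simp only [IsMonotonePath, ofPred_and, ofPred_forall]
  refine .inter (isClosed_iInter fun i => isClosed_monotone.preimage (by fun_prop))
    (.inter (isClosed_eq (by fun_prop) continuous_const)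
      (.inter (isClosed_eq (by fun_prop) continuous_const)
        (isClosed_iInter fun t => isClosed_eq (by fun_prop) continuous_const)))

lemma isCompact_setOf_isMonotonePath :
    IsCompact {h : C(Icc (0:ℝ) 1, Fin l → ℝ) | IsMonotonePath ξ ξ' h} := by
  refine ArzelaAscoli.isCompact_of_equicontinuous _ ?_
    (LipschitzWith.uniformEquicontinuous _ _ fun h => h.2.lipschitzWith).equicontinuous
  have himage : ContinuousMap.toFun '' {h : C(Icc (0:ℝ) 1, Fin l → ℝ) | IsMonotonePath ξ ξ' h} =
      {f | IsMonotonePath ξ ξ' f} := by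
    ext f
    exact ⟨fun ⟨h, hh, hf⟩ => hf ▸ hh, fun hf => ⟨⟨f, hf.lipschitzWith.continuous⟩, hf, rfl⟩⟩
  rw [himage]
  exact (isCompact_univ_pi fun _ => isCompact_Icc).of_isClosed_subset
    isClosed_setOf_isMonotonePath fun f hf =>
      mem_univ_pi.2 fun t => ⟨hf.le_apply t, hf.apply_le t⟩

end MonotonePath

lemma Filter.Tendsto.tendstoUniformly_comp_extIcc {l : ℕ} {ι : Type*} {L : Filter ι}
    {g : ι → C(Icc (0:ℝ) 1, Fin l → ℝ)} {h : C(Icc (0:ℝ) 1, Fin l → ℝ)} (hg : Tendsto g L (𝓝 h))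
    {ψ : (Fin l → ℝ) → ℝ} (hψ : Continuous ψ) :
    TendstoUniformly (fun i t => ψ (extIcc (g i) t)) (fun t => ψ (extIcc h t)) L :=
  (ContinuousMap.tendsto_iff_tendstoUniformly.1
    (((ContinuousMap.continuous_postcomp ⟨ψ, hψ⟩).tendsto h).comp hg)).comp
    (projIcc 0 1 zero_le_one)

lemma continuous_extIcc {l : ℕ} (h : C(Icc (0:ℝ) 1, Fin l → ℝ)) : Continuous (extIcc h) :=
  h.continuous.comp continuous_projIcc

lemma continuousOn_setIntegral_stieltjesOf_extIcc {l : ℕ} {ψ : (Fin l → ℝ) → ℝ}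
    (hψ : Continuous ψ) (j : Fin l) :
    ContinuousOn (fun h : C(Icc (0:ℝ) 1, Fin l → ℝ) =>
        ∫ t in Icc (0:ℝ) 1, ψ (extIcc h t) ∂stieltjesOf fun t => extIcc h t j)
      {h | Monotone fun t => h t j} := by
  intro h hh
  have hL : Tendsto id (𝓝[{h | Monotone fun t => h t j}] h) (𝓝 h) :=
    tendsto_id.mono_left nhdsWithin_le_nhds
  exact tendsto_setIntegral_Icc_stieltjesOf_of_tendstoUniformlyOn
    (fun g => hψ.comp (continuous_extIcc g)) (hψ.comp (continuous_extIcc h))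
    (hL.tendstoUniformly_comp_extIcc hψ).tendstoUniformlyOn
    (eventually_nhdsWithin_of_forall fun g hg =>
      ⟨hg.comp (monotone_projIcc zero_le_one), (continuous_apply j).comp (continuous_extIcc g)⟩)
    (hh.comp (monotone_projIcc zero_le_one)) ((continuous_apply j).comp (continuous_extIcc h))
    (hL.tendstoUniformly_comp_extIcc (continuous_apply j)).tendstoUniformlyOn

/-- On the compact set `Γ(ξ,ξ')` of continuous, componentwise nondecreasing,
constant-ℓ¹-speed paths from `ξ` to `ξ'`, the jump-cost functional
`F(h) = ∫₀¹ c(x + γ(h(λ)−ξ), h(λ)) dh(λ)` is continuous (uniform topology), and hence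
its infimum over `Γ(ξ,ξ')` is attained. -/
theorem stmt_13 {l d : ℕ} (c : (Fin d → ℝ) → (Fin l → ℝ) → Fin l → ℝ)
    (hc : Continuous fun p : (Fin d → ℝ) × (Fin l → ℝ) => c p.1 p.2)
    (γ : Matrix (Fin d) (Fin l) ℝ) (x : Fin d → ℝ)
    (ξ ξ' : Fin l → ℝ) (hle : ∀ i, ξ i ≤ ξ' i) :
    let Γ : Set C(Set.Icc (0:ℝ) 1, Fin l → ℝ) :=
      {h | (∀ i, Monotone fun lam => h lam i) ∧
        h ⟨0, by norm_num⟩ = ξ ∧ h ⟨1, by norm_num⟩ = ξ' ∧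
        ∀ lam : Set.Icc (0:ℝ) 1, ∑ i, |h lam i - ξ i| = (lam : ℝ) * ∑ i, |ξ' i - ξ i|}
    let F : C(Set.Icc (0:ℝ) 1, Fin l → ℝ) → ℝ := fun h =>
      ∑ j, ∫ lam in Set.Icc (0:ℝ) 1,
        c (x + γ.mulVec (extIcc h lam - ξ)) (extIcc h lam) j
          ∂(stieltjesOf fun lam => extIcc h lam j)
    ContinuousOn F Γ ∧ ∃ h ∈ Γ, ∀ g ∈ Γ, F h ≤ F g := by
  intro Γ F
  have hcost : ∀ j, Continuous fun y : Fin l → ℝ => c (x + γ.mulVec (y - ξ)) y j := fun j =>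
    (continuous_apply j).comp (hc.comp ((continuous_const.add
      (continuous_const.matrix_mulVec (continuous_id.sub continuous_const))).prodMk continuous_id))
  have hF : ContinuousOn F Γ := continuousOn_finsetSum _ fun j _ =>
    (continuousOn_setIntegral_stieltjesOf_extIcc (hcost j) j).mono fun h hh => hh.1 j
  have hΓ : Γ.Nonempty :=
    ⟨⟨_, (isMonotonePath_lineMap hle).lipschitzWith.continuous⟩, isMonotonePath_lineMap hle⟩
  obtain ⟨h, hhΓ, hmin⟩ := isCompact_setOf_isMonotonePath.exists_isMinOn hΓ hF
  exact ⟨hF, h, hhΓ, hmin⟩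
end

section
/- Let P₂(ℝ^k) denote the space of Borel probability measures on ℝ^k with finite second moment, equipped with the 2-Wasserstein distance. Let g : P₂(ℝ^k) × ℝ^k → ℝ be jointly continuous. Suppose that for every m ∈ P₂(ℝ^k), the set N_m := {x ∈ ℝ^k : g(m, x) > 0} is m-null, i.e. m(N_m) = 0. Then N_m = ∅ for every m ∈ P₂(ℝ^k); that is, g(m, x) ≤ 0 for all m ∈ P₂(ℝ^k) and all x ∈ ℝ^k. -/
/-! The mixtures `m_λ = λ δₓ + (1 - λ) m` charge the point `x`, so the hypothesis applied to `m_λ`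
forces `g m_λ x ≤ 0`. Moving the mass `λ` sitting at `x` onto a copy of `m` and leaving the
rest on the diagonal couples `m_λ` with `m` at cost `λ ∫ ‖x - y‖² dm`, so `m_λ → m` in `W₂` as
`λ → 0`, and continuity of `g` gives `g m x ≤ 0`. -/

open MeasureTheory Filter

/-- The squared 2-Wasserstein cost between two measures, as the infimum of the
expected squared distance over couplings. -/
noncomputable def W2sq {E : Type*} [MeasurableSpace E] [NormedAddCommGroup E]
    (μ ν : Measure E) : ℝ :=
  sInf {r : ℝ | ∃ π : Measure (E × E), IsProbabilityMeasure π ∧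
    π.map Prod.fst = μ ∧ π.map Prod.snd = ν ∧ r = ∫ p, ‖p.1 - p.2‖ ^ 2 ∂π}

/-- Finite second moment. -/
def FiniteSecondMoment {E : Type*} [MeasurableSpace E] [NormedAddCommGroup E]
    (μ : MeasureTheory.Measure E) : Prop :=
  MeasureTheory.Integrable (fun x => ‖x‖ ^ 2) μ

open scoped ENNReal Topology

namespace MeasureTheory

section Mixture

variable {α : Type*} [MeasurableSpace α] {t : ℝ≥0∞} {x : α} {m : Measure α}

noncomputable def mixDirac (t : ℝ≥0∞) (x : α) (m : Measure α) : Measure α :=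
  t • Measure.dirac x + (1 - t) • m

lemma isProbabilityMeasure_mixDirac (ht : t ≤ 1) [IsProbabilityMeasure m] :
    IsProbabilityMeasure (mixDirac t x m) :=
  ⟨by simp [mixDirac, add_tsub_cancel_of_le ht]⟩

lemma le_mixDirac_apply {s : Set α} (hx : x ∈ s) : t ≤ mixDirac t x m s := by
  simp [mixDirac, Measure.dirac_apply_of_mem hx]

noncomputable def mixDiracCoupling (t : ℝ≥0∞) (x : α) (m : Measure α) : Measure (α × α) :=
  t • m.map (Prod.mk x) + (1 - t) • m.map Function.diag

lemma map_fst_mixDiracCoupling [IsProbabilityMeasure m] :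
    (mixDiracCoupling t x m).map Prod.fst = mixDirac t x m := by
  simp only [mixDiracCoupling, Measure.map_add _ _ measurable_fst, Measure.map_smul,
    Measure.map_map measurable_fst measurable_prodMk_left,
    Measure.map_map measurable_fst measurable_diag]
  simp [Function.comp_def, Function.diag, Measure.map_const, mixDirac]

lemma map_snd_mixDiracCoupling (ht : t ≤ 1) :
    (mixDiracCoupling t x m).map Prod.snd = m := by
  simp only [mixDiracCoupling, Measure.map_add _ _ measurable_snd, Measure.map_smul,
    Measure.map_map measurable_snd measurable_prodMk_left,
    Measure.map_map measurable_snd measurable_diag]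
  simp [Function.comp_def, Function.diag, ← add_smul, add_tsub_cancel_of_le ht]

lemma isProbabilityMeasure_mixDiracCoupling (ht : t ≤ 1) [IsProbabilityMeasure m] :
    IsProbabilityMeasure (mixDiracCoupling t x m) :=
  ⟨by rw [← Set.preimage_univ (f := Prod.snd), ← Measure.map_apply measurable_snd .univ,
    map_snd_mixDiracCoupling ht, measure_univ]⟩

end Mixture

variable {E : Type*} [NormedAddCommGroup E] [MeasurableSpace E]

lemma W2sq_nonneg (μ ν : Measure E) : 0 ≤ W2sq μ ν :=
  Real.sInf_nonneg <| by
    rintro r ⟨π, -, -, -, rfl⟩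
    positivity

lemma W2sq_le_integral {μ ν : Measure E} (π : Measure (E × E)) [IsProbabilityMeasure π]
    (h₁ : π.map Prod.fst = μ) (h₂ : π.map Prod.snd = ν) :
    W2sq μ ν ≤ ∫ p, ‖p.1 - p.2‖ ^ 2 ∂π :=
  csInf_le ⟨0, by rintro r ⟨π, -, -, -, rfl⟩; positivity⟩ ⟨π, inferInstance, h₁, h₂, rfl⟩

variable [OpensMeasurableSpace E] [SecondCountableTopology E]

lemma finiteSecondMoment_iff_memLp {μ : Measure E} :
    FiniteSecondMoment μ ↔ MemLp id 2 μ :=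
  (memLp_two_iff_integrable_sq_norm aestronglyMeasurable_id).symm

lemma FiniteSecondMoment.integrable_norm_sub_sq {μ : Measure E} [IsFiniteMeasure μ]
    (hμ : FiniteSecondMoment μ) (x : E) : Integrable (fun y => ‖x - y‖ ^ 2) μ :=
  (memLp_two_iff_integrable_sq_norm (by fun_prop)).1
    ((memLp_const x).sub (finiteSecondMoment_iff_memLp.1 hμ))

lemma finiteSecondMoment_dirac (x : E) : FiniteSecondMoment (Measure.dirac x) :=
  integrable_dirac' (by fun_prop) enorm_lt_top

section Coupling

variable {t : ℝ≥0∞} {x : E} {m : Measure E}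

lemma FiniteSecondMoment.mixDirac (ht : t ≠ ∞) (hm : FiniteSecondMoment m) :
    FiniteSecondMoment (mixDirac t x m) :=
  ((finiteSecondMoment_dirac x).smul_measure ht).add_measure
    (hm.smul_measure (ENNReal.sub_ne_top ENNReal.one_ne_top))

lemma integral_mixDiracCoupling (ht : t ≠ ∞) [IsFiniteMeasure m] (hm : FiniteSecondMoment m) :
    ∫ p, ‖p.1 - p.2‖ ^ 2 ∂mixDiracCoupling t x m = t.toReal * ∫ y, ‖x - y‖ ^ 2 ∂m := by
  have hF : Continuous fun p : E × E => ‖p.1 - p.2‖ ^ 2 := by fun_prop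
  have hoff : Integrable (fun p : E × E => ‖p.1 - p.2‖ ^ 2) (m.map (Prod.mk x)) :=
    (integrable_map_measure hF.aestronglyMeasurable measurable_prodMk_left.aemeasurable).2
      (hm.integrable_norm_sub_sq x)
  have hdiag : Integrable (fun p : E × E => ‖p.1 - p.2‖ ^ 2) (m.map Function.diag) :=
    (integrable_map_measure hF.aestronglyMeasurable measurable_diag.aemeasurable).2
      (by simp [Function.comp_def, Function.diag])
  rw [mixDiracCoupling, integral_add_measure (hoff.smul_measure ht)
      (hdiag.smul_measure (ENNReal.sub_ne_top ENNReal.one_ne_top)),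
    integral_smul_measure, integral_smul_measure,
    integral_map measurable_prodMk_left.aemeasurable hF.aestronglyMeasurable,
    integral_map measurable_diag.aemeasurable hF.aestronglyMeasurable]
  simp [Function.diag]

lemma W2sq_mixDirac_le (ht : t ≤ 1) [IsProbabilityMeasure m] (hm : FiniteSecondMoment m) :
    W2sq (mixDirac t x m) m ≤ t.toReal * ∫ y, ‖x - y‖ ^ 2 ∂m := by
  have := isProbabilityMeasure_mixDiracCoupling (x := x) (m := m) ht
  calc W2sq (mixDirac t x m) m ≤ ∫ p, ‖p.1 - p.2‖ ^ 2 ∂mixDiracCoupling t x m :=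
        W2sq_le_integral _ map_fst_mixDiracCoupling (map_snd_mixDiracCoupling ht)
    _ = _ := integral_mixDiracCoupling (ne_top_of_le_ne_top ENNReal.one_ne_top ht) hm

end Coupling

lemma tendsto_W2sq_mixDirac {ι : Type*} {l : Filter ι} {t : ι → ℝ≥0∞} (ht₁ : ∀ i, t i ≤ 1)
    (ht : Tendsto t l (𝓝 0)) (x : E) {m : Measure E} [IsProbabilityMeasure m]
    (hm : FiniteSecondMoment m) :
    Tendsto (fun i => W2sq (mixDirac (t i) x m) m) l (𝓝 0) := by
  have hlim : Tendsto (fun i => (t i).toReal * ∫ y, ‖x - y‖ ^ 2 ∂m) l (𝓝 0) := by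
    simpa using ((ENNReal.tendsto_toReal ENNReal.zero_ne_top).comp ht).mul_const
      (∫ y, ‖x - y‖ ^ 2 ∂m)
  exact tendsto_of_tendsto_of_tendsto_of_le_of_le tendsto_const_nhds hlim
    (fun _ => W2sq_nonneg _ _) (fun i => W2sq_mixDirac_le (ht₁ i) hm)

end MeasureTheory

/-- If `g : P₂(ℝ^k) × ℝ^k → ℝ` is jointly continuous (with respect to 2-Wasserstein
convergence in the measure variable) and for every `m ∈ P₂(ℝ^k)` the set
`N_m = {x : g(m,x) > 0}` is `m`-null, then `N_m = ∅` for every `m`, i.e. `g ≤ 0`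
everywhere. -/
theorem stmt_14 {k : ℕ} (g : Measure (Fin k → ℝ) → (Fin k → ℝ) → ℝ)
    (hg_cont : ∀ m : Measure (Fin k → ℝ), IsProbabilityMeasure m → FiniteSecondMoment m →
      ∀ (mseq : ℕ → Measure (Fin k → ℝ)) (xseq : ℕ → Fin k → ℝ) (x : Fin k → ℝ),
        (∀ n, IsProbabilityMeasure (mseq n) ∧ FiniteSecondMoment (mseq n)) →
        Tendsto (fun n => W2sq (mseq n) m) atTop (nhds 0) →
        Tendsto xseq atTop (nhds x) →
        Tendsto (fun n => g (mseq n) (xseq n)) atTop (nhds (g m x)))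
    (hnull : ∀ m : Measure (Fin k → ℝ), IsProbabilityMeasure m → FiniteSecondMoment m →
      m {x | 0 < g m x} = 0) :
    ∀ m : Measure (Fin k → ℝ), IsProbabilityMeasure m → FiniteSecondMoment m →
      ∀ x, g m x ≤ 0 := by
  intro m hm hfsm x
  set t : ℕ → ℝ≥0∞ := fun n => ((n + 1 : ℕ) : ℝ≥0∞)⁻¹
  have ht₁ (n : ℕ) : t n ≤ 1 := ENNReal.inv_le_one.2 (by exact_mod_cast n.succ_pos)
  have hmix (n : ℕ) : IsProbabilityMeasure (mixDirac (t n) x m) ∧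
      FiniteSecondMoment (mixDirac (t n) x m) :=
    ⟨isProbabilityMeasure_mixDirac (ht₁ n),
      hfsm.mixDirac (ne_top_of_le_ne_top ENNReal.one_ne_top (ht₁ n))⟩
  have hle (n : ℕ) : g (mixDirac (t n) x m) x ≤ 0 := not_lt.1 fun hx =>
    ENNReal.inv_ne_zero.2 (ENNReal.natCast_ne_top _) <| le_zero_iff.1 <|
      (le_mixDirac_apply (s := {y | 0 < g _ y}) hx).trans_eq (hnull _ (hmix n).1 (hmix n).2)
  have hW2 : Tendsto (fun n => W2sq (mixDirac (t n) x m) m) atTop (𝓝 0) :=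
    tendsto_W2sq_mixDirac ht₁
      (ENNReal.tendsto_inv_nat_nhds_zero.comp (tendsto_add_atTop_nat 1)) x hfsm
  exact le_of_tendsto (hg_cont m hm hfsm _ (fun _ => x) x hmix hW2 tendsto_const_nhds)
    (.of_forall hle)
end
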